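/- Let G be a group and φ an automorphism of G, and let G ⋊_φ ℤ denote the semidirect product in which the generator 1 ∈ ℤ acts on G by φ. Then G ⋊_φ ℤ is bi-orderable if and only if there exists a bi-ordering < of G that is preserved by φ (g < h implies φ(g) < φ(h)). -/

import Mathlib

/-!
A bi-ordering of `G ⋊_φ ℤ` restricts to one of `G`, and `φ` preserves it because `φ` is
conjugation by the generator of `ℤ`, and conjugation preserves any bi-ordering. Conversely, if `φ`
preserves a bi-ordering of `G`, so do all its powers, and the lexicographic order on `G ⋊_φ ℤ`
(first the `ℤ`-coordinate, then the `G`-coordinate) is a bi-ordering.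
-/

/-- A bi-ordering of a group `G`: a strict total order invariant under
multiplication on both sides. -/
def IsBiOrdering {G : Type*} [Group G] (lt : G → G → Prop) : Prop :=
  IsStrictTotalOrder G lt ∧
    (∀ f g h : G, lt g h → lt (f * g) (f * h)) ∧
    (∀ f g h : G, lt g h → lt (g * f) (h * f))

/-- A group is bi-orderable if it admits a bi-ordering. -/
def BiOrderable (G : Type*) [Group G] : Prop :=
  ∃ lt : G → G → Prop, IsBiOrdering lt

open Function SemidirectProduct

theorem IsStrictTotalOrder.invImage {α β : Type*} {r : α → α → Prop} [IsStrictTotalOrder α r]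
    {f : β → α} (hf : Injective f) : IsStrictTotalOrder β (InvImage r f) :=
  { InvImage.trichotomous hf with }

instance Prod.Lex.isStrictTotalOrder {α β : Type*} (r : α → α → Prop) (s : β → β → Prop)
    [IsStrictTotalOrder α r] [IsStrictTotalOrder β s] : IsStrictTotalOrder (α × β) (Prod.Lex r s) :=
  {}

theorem isBiOrdering_lt (G : Type*) [Group G] [LinearOrder G] [MulLeftStrictMono G]
    [MulRightStrictMono G] : IsBiOrdering (G := G) (· < ·) :=
  ⟨inferInstance, fun _ _ _ h => mul_lt_mul_right h _, fun _ _ _ h => mul_lt_mul_left h _⟩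

namespace IsBiOrdering

variable {G : Type*} [Group G] {lt : G → G → Prop}

theorem comap {H : Type*} [Group H] (hlt : IsBiOrdering lt) (f : H →* G) (hf : Injective f) :
    IsBiOrdering (InvImage lt f) := by
  obtain ⟨_, hleft, hright⟩ := hlt
  refine ⟨IsStrictTotalOrder.invImage hf, fun a b c h => ?_, fun a b c h => ?_⟩
  · simpa only [InvImage, map_mul] using hleft (f a) _ _ h
  · simpa only [InvImage, map_mul] using hright (f a) _ _ h

theorem conj (hlt : IsBiOrdering lt) (c : G) {g h : G} (hgh : lt g h) :
    lt (c * g * c⁻¹) (c * h * c⁻¹) :=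
  hlt.2.2 _ _ _ (hlt.2.1 _ _ _ hgh)

end IsBiOrdering

def MulAut.preservingRel {G : Type*} [Group G] (r : G → G → Prop) : Subgroup (MulAut G) where
  carrier := {e | ∀ g h, r (e g) (e h) ↔ r g h}
  one_mem' _ _ := Iff.rfl
  mul_mem' he he' g h := (he _ _).trans (he' g h)
  inv_mem' {e} he g h := by simpa using (he (e⁻¹ g) (e⁻¹ h)).symm

theorem MulAut.mem_preservingRel_of_forall {G : Type*} [Group G] {r : G → G → Prop}
    [IsStrictTotalOrder G r] {e : MulAut G} (he : ∀ g h, r g h → r (e g) (e h)) :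
    e ∈ MulAut.preservingRel r :=
  fun _ _ => (RelEmbedding.ofMonotone e he).map_rel_iff

theorem IsBiOrdering.semidirectProduct_lex {N H : Type*} [Group N] [Group H]
    {ψ : H →* MulAut N} {ltN : N → N → Prop} {ltH : H → H → Prop} (hN : IsBiOrdering ltN)
    (hψ : ∀ h, ψ h ∈ MulAut.preservingRel ltN) (hH : IsBiOrdering ltH) :
    IsBiOrdering (InvImage (Prod.Lex ltH ltN) fun a : N ⋊[ψ] H => (a.right, a.left)) := by
  obtain ⟨_, hNleft, hNright⟩ := hN
  obtain ⟨_, hHleft, hHright⟩ := hH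
  refine ⟨IsStrictTotalOrder.invImage fun a b hab => ?_, fun f a b hab => ?_, fun f a b hab => ?_⟩
  · obtain ⟨hr, hl⟩ := Prod.mk.inj hab
    exact SemidirectProduct.ext hl hr
  all_goals
    simp only [InvImage, Prod.lex_iff, mul_left, mul_right] at hab ⊢
    obtain hr | ⟨hr, hl⟩ := hab
  · exact Or.inl (hHleft _ _ _ hr)
  · exact Or.inr ⟨by rw [hr], hNleft _ _ _ ((hψ f.right _ _).2 hl)⟩
  · exact Or.inl (hHright _ _ _ hr)
  · exact Or.inr ⟨by rw [hr], by rw [hr]; exact hNright _ _ _ hl⟩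

theorem semidirect_product_with_int_biOrderable_iff
    {G : Type*} [Group G] (φ : MulAut G) :
    BiOrderable (G ⋊[zpowersHom (MulAut G) φ] Multiplicative ℤ) ↔
      ∃ lt : G → G → Prop, IsBiOrdering lt ∧
        ∀ g h : G, lt g h → lt (φ g) (φ h) := by
  constructor
  · rintro ⟨lt, hlt⟩
    refine ⟨InvImage lt inl, hlt.comap inl inl_injective, fun g h hgh => ?_⟩
    have inl_φ (x : G) : (inl (φ x) : G ⋊[zpowersHom (MulAut G) φ] Multiplicative ℤ) =
        inr (.ofAdd 1) * inl x * (inr (.ofAdd 1))⁻¹ := by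
      simpa using inl_aut (φ := zpowersHom (MulAut G) φ) (.ofAdd 1) x
    simpa only [InvImage, inl_φ] using hlt.conj _ hgh
  · rintro ⟨lt, hlt, hφ⟩
    have := hlt.1
    have hφ_mem : φ ∈ MulAut.preservingRel lt := MulAut.mem_preservingRel_of_forall hφ
    exact ⟨_, hlt.semidirectProduct_lex (fun n => zpow_mem hφ_mem n.toAdd)
      (isBiOrdering_lt (Multiplicative ℤ))⟩
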